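/- arXiv:0706.2649 — 7 statements merged into one kernel-verified Lean document; each statement's English description precedes it below -/
import Mathlib

section
/- Let V and W be finite-dimensional vector spaces over a field K, F an ℝ-filtration of V, G an ℝ-filtration of W, and φ : V → W a K-linear map. (1) Suppose φ is injective. If F = φ*G, then λ_F(x) = λ_G(φ(x)) for every x ∈ V; conversely, if both F and G are left continuous and λ_F(x) = λ_G(φ(x)) for every x ∈ V, then F = φ*G. (2) Suppose φ is surjective. If G = φ_*F, then λ_G(y) = sup_{x ∈ φ^{-1}(y)} λ_F(x) for every y ∈ W; conversely, if both F and G are left continuous and this index formula holds for every y ∈ W, then G = φ_*F. -/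
/-- The index function of an `ℝ`-filtration `F` of a vector space `V`:
`λ(x) = sup {r ∈ ℝ : x ∈ F r}` in `ℝ ∪ {±∞}`, with `sup ∅ = -∞`. -/
noncomputable def filtIndex {K V : Type*} [Field K] [AddCommGroup V] [Module K V]
    (F : ℝ → Submodule K V) (x : V) : EReal :=
  sSup ((fun r : ℝ => (r : EReal)) '' {r : ℝ | x ∈ F r})

/-!
Everything reduces to two facts about the index. For an antitone filtration `F`, one has
`x ∈ F^l_r ↔ r ≤ λ_F(x)`; hence a left-continuous filtration is recovered from its index, and
`λ_{F^l} = λ_F`. The index of the weak direct image `φ_♭F` at `y` is the supremum of `λ_F` over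
the fibre `φ⁻¹{y}`, by interchanging two suprema, while the index of `φ*G` is `λ_G ∘ φ` on the nose.
-/

section filtIndex

variable {K V W : Type*} [Field K] [AddCommGroup V] [Module K V] [AddCommGroup W] [Module K W]
  {F : ℝ → Submodule K V}

lemma le_filtIndex_of_mem {x : V} {r : ℝ} (h : x ∈ F r) : (r : EReal) ≤ filtIndex F x :=
  le_sSup ⟨r, h, rfl⟩

lemma filtIndex_le_iff {x : V} {a : EReal} :
    filtIndex F x ≤ a ↔ ∀ r : ℝ, x ∈ F r → (r : EReal) ≤ a := by
  simp [filtIndex, sSup_le_iff]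

lemma mem_of_lt_filtIndex (hF : Antitone F) {x : V} {s : ℝ} (h : (s : EReal) < filtIndex F x) :
    x ∈ F s := by
  obtain ⟨_, ⟨t, ht, rfl⟩, hst⟩ := lt_sSup_iff.mp h
  exact hF (EReal.coe_lt_coe_iff.mp hst).le ht

lemma mem_iInf_lt_iff_le_filtIndex (hF : Antitone F) {x : V} {r : ℝ} :
    x ∈ ⨅ s < r, F s ↔ (r : EReal) ≤ filtIndex F x := by
  simp only [Submodule.mem_iInf]
  refine ⟨fun h => EReal.ge_of_forall_gt_iff_ge.mp fun s hs => ?_,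
    fun h s hs => mem_of_lt_filtIndex hF ((EReal.coe_lt_coe_iff.mpr hs).trans_le h)⟩
  exact le_filtIndex_of_mem (h s (EReal.coe_lt_coe_iff.mp hs))

lemma mem_iff_le_filtIndex (hF : Antitone F) (hFl : ∀ r : ℝ, F r = ⨅ s < r, F s) {x : V} {r : ℝ} :
    x ∈ F r ↔ (r : EReal) ≤ filtIndex F x := by
  rw [hFl r, mem_iInf_lt_iff_le_filtIndex hF]

lemma filtIndex_iInf_lt (hF : Antitone F) (x : V) :
    filtIndex (fun r => ⨅ s < r, F s) x = filtIndex F x := by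
  refine le_antisymm (filtIndex_le_iff.mpr fun r hr => (mem_iInf_lt_iff_le_filtIndex hF).mp hr)
    (filtIndex_le_iff.mpr fun r hr => le_filtIndex_of_mem ?_)
  simp only [Submodule.mem_iInf]
  exact fun s hs => hF hs.le hr

lemma filtIndex_comap (G : ℝ → Submodule K W) (φ : V →ₗ[K] W) (x : V) :
    filtIndex (fun r => (G r).comap φ) x = filtIndex G (φ x) :=
  rfl

lemma filtIndex_map (φ : V →ₗ[K] W) (y : W) :
    filtIndex (fun r => (F r).map φ) y = sSup (filtIndex F '' (φ ⁻¹' {y})) := by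
  refine le_antisymm (filtIndex_le_iff.mpr ?_) (sSup_le ?_)
  · rintro r ⟨x, hx, rfl⟩
    exact (le_filtIndex_of_mem hx).trans (le_sSup ⟨x, rfl, rfl⟩)
  · rintro _ ⟨x, rfl, rfl⟩
    exact filtIndex_le_iff.mpr fun r hr => le_filtIndex_of_mem ⟨x, hr, rfl⟩

end filtIndex

theorem stmt_5_general {K V W : Type*} [Field K] [AddCommGroup V] [Module K V]
    [AddCommGroup W] [Module K W]
    (F : ℝ → Submodule K V) (G : ℝ → Submodule K W)
    (hF : Antitone F) (hG : Antitone G) (φ : V →ₗ[K] W) :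
    -- (1) the injective case: `F = φ*G` iff the index is preserved
    (Function.Injective φ →
      (((∀ r : ℝ, F r = (G r).comap φ) →
          ∀ x : V, filtIndex F x = filtIndex G (φ x)) ∧
       ((∀ r : ℝ, F r = ⨅ s < r, F s) → (∀ r : ℝ, G r = ⨅ s < r, G s) →
          (∀ x : V, filtIndex F x = filtIndex G (φ x)) →
          ∀ r : ℝ, F r = (G r).comap φ))) ∧
    -- (2) the surjective case: `G = φ_*F` iff the index formula holds
    (Function.Surjective φ →
      (((∀ r : ℝ, G r = ⨅ s < r, (F s).map φ) →
          ∀ y : W, filtIndex G y = sSup (filtIndex F '' (φ ⁻¹' {y}))) ∧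
       ((∀ r : ℝ, F r = ⨅ s < r, F s) → (∀ r : ℝ, G r = ⨅ s < r, G s) →
          (∀ y : W, filtIndex G y = sSup (filtIndex F '' (φ ⁻¹' {y}))) →
          ∀ r : ℝ, G r = ⨅ s < r, (F s).map φ))) := by
  have hFφ : Antitone fun r => (F r).map φ := fun _ _ h => Submodule.map_mono (hF h)
  refine ⟨fun _ => ⟨?_, ?_⟩, fun _ => ⟨?_, ?_⟩⟩
  · intro h x
    rw [show F = fun r => (G r).comap φ from funext h, filtIndex_comap]
  · intro hFl hGl hidx r
    ext x
    rw [Submodule.mem_comap, mem_iff_le_filtIndex hF hFl, mem_iff_le_filtIndex hG hGl, hidx]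
  · intro h y
    rw [show G = fun r => ⨅ s < r, (F s).map φ from funext h, filtIndex_iInf_lt hFφ,
      filtIndex_map]
  · intro _ hGl hidx r
    ext y
    rw [mem_iff_le_filtIndex hG hGl, hidx, ← filtIndex_map, mem_iInf_lt_iff_le_filtIndex hFφ]

theorem stmt_5 {K V W : Type*} [Field K] [AddCommGroup V] [Module K V]
    [AddCommGroup W] [Module K W] [FiniteDimensional K V] [FiniteDimensional K W]
    (F : ℝ → Submodule K V) (G : ℝ → Submodule K W)
    (hF : Antitone F) (hG : Antitone G) (φ : V →ₗ[K] W) :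
    -- (1) the injective case: `F = φ*G` iff the index is preserved
    (Function.Injective φ →
      (((∀ r : ℝ, F r = (G r).comap φ) →
          ∀ x : V, filtIndex F x = filtIndex G (φ x)) ∧
       ((∀ r : ℝ, F r = ⨅ s < r, F s) → (∀ r : ℝ, G r = ⨅ s < r, G s) →
          (∀ x : V, filtIndex F x = filtIndex G (φ x)) →
          ∀ r : ℝ, F r = (G r).comap φ))) ∧
    -- (2) the surjective case: `G = φ_*F` iff the index formula holds
    (Function.Surjective φ →
      (((∀ r : ℝ, G r = ⨅ s < r, (F s).map φ) →
          ∀ y : W, filtIndex G y = sSup (filtIndex F '' (φ ⁻¹' {y}))) ∧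
       ((∀ r : ℝ, F r = ⨅ s < r, F s) → (∀ r : ℝ, G r = ⨅ s < r, G s) →
          (∀ y : W, filtIndex G y = sSup (filtIndex F '' (φ ⁻¹' {y}))) →
          ∀ r : ℝ, G r = ⨅ s < r, (F s).map φ))) :=
  stmt_5_general F G hF hG φ
end

section
/- Let V be a nonzero finite-dimensional vector space over a field K equipped with a separated, exhaustive and left-continuous ℝ-filtration F. A basis e = (e_1, …, e_n) of V is maximal if and only if, for every real number r, the number of elements of e lying in F_r V equals dim_K(F_r V). -/
open MeasureTheory
open scoped ENNReal

/-- The Borel probability measure `ν_e = (1/n) ∑ᵢ δ_{λ(eᵢ)}` on `ℝ` associated to a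
family `e = (e₁, …, e_n)` of vectors of a filtered vector space. -/
noncomputable def basisMeasure {K V : Type*} [Field K] [AddCommGroup V] [Module K V]
    {n : ℕ} (F : ℝ → Submodule K V) (e : Fin n → V) : Measure ℝ :=
  (n : ℝ≥0∞)⁻¹ • ∑ i : Fin n, Measure.dirac ((filtIndex F (e i)).toReal)

/-- `μ ⪰ ν` : for every bounded increasing function `f : ℝ → ℝ`, `∫ f dν ≤ ∫ f dμ`. -/
def MeasureRightOf (μ ν : Measure ℝ) : Prop :=
  ∀ f : ℝ → ℝ, Monotone f → (∃ C : ℝ, ∀ x, |f x| ≤ C) →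
    ∫ x, f x ∂ν ≤ ∫ x, f x ∂μ

/-- A basis `e` of `V` is maximal if `ν_e ⪰ ν_{e'}` for every basis `e'` of `V`. -/
def MaximalBasis {K V : Type*} [Field K] [AddCommGroup V] [Module K V]
    {n : ℕ} (F : ℝ → Submodule K V) (e : Module.Basis (Fin n) K V) : Prop :=
  ∀ e' : Module.Basis (Fin n) K V, MeasureRightOf (basisMeasure F ⇑e) (basisMeasure F ⇑e')


/-!
For `x ≠ 0`, separatedness, exhaustiveness and left continuity force `{r | x ∈ F_r V}` to be the
closed ray `(-∞, λ(x)]`, so `#{i | λ(eᵢ) ≥ r} = #{i | eᵢ ∈ F_r V}`. For any basis this count is at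
most `dim F_r V`, with equality for a basis extending one of `F_r V`. Testing `ν_e ⪰ ν_{e'}` against
the indicator of `[r, ∞)` shows that maximality forces these counts for `e` to dominate those of
every other basis, i.e. to equal `dim F_r V`. Conversely, if the counts of `e` dominate those of
`e'`, then after sorting, the `k`-th smallest index of `e` dominates that of `e'` for each `k`,
which gives `∫ f dν_e ≥ ∫ f dν_{e'}` for every increasing `f`.
-/

open Finset Module

theorem eq_Iic_csSup_of_mem_iff_forall_lt {α : Type*} [ConditionallyCompleteLinearOrder α]
    {S : Set α} (hne : S.Nonempty) (hbdd : BddAbove S) (hS : ∀ r, r ∈ S ↔ ∀ s < r, s ∈ S) :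
    S = Set.Iic (sSup S) := by
  ext r
  refine ⟨fun hr => le_csSup hbdd hr, fun hr => (hS r).2 fun s hs => ?_⟩
  obtain ⟨u, hu, hsu⟩ := exists_lt_of_lt_csSup hne (hs.trans_le hr)
  exact (hS u).1 hu s hsu

section Counting

variable {α β : Type*} [LinearOrder α] {n : ℕ}

theorem le_of_monotone_of_card_le {u v : Fin n → α} (hu : Monotone u) (hv : Monotone v)
    (h : ∀ r, #{i | r ≤ u i} ≤ #{i | r ≤ v i}) (k : Fin n) : u k ≤ v k := by
  by_contra! hlt
  have hIci : Ici k ⊆ ({i | u k ≤ u i} : Finset (Fin n)) := fun i hi =>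
    mem_filter.2 ⟨mem_univ i, hu (mem_Ici.1 hi)⟩
  have hIoi : ({i | u k ≤ v i} : Finset (Fin n)) ⊆ Ioi k := fun i hi =>
    mem_Ioi.2 (lt_of_not_ge fun hik => (hv hik).not_gt (hlt.trans_le (mem_filter.1 hi).2))
  have := (card_le_card hIci).trans ((h (u k)).trans (card_le_card hIoi))
  rw [Fin.card_Ici, Fin.card_Ioi] at this
  omega

theorem sum_le_sum_of_card_le [AddCommMonoid β] [PartialOrder β] [IsOrderedAddMonoid β]
    {s t : Fin n → α} (h : ∀ r, #{i | r ≤ s i} ≤ #{i | r ≤ t i}) {f : α → β} (hf : Monotone f) :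
    ∑ i, f (s i) ≤ ∑ i, f (t i) := by
  have hsorted : ∀ k, s (Tuple.sort s k) ≤ t (Tuple.sort t k) :=
    le_of_monotone_of_card_le (Tuple.monotone_sort s) (Tuple.monotone_sort t) fun r => by
      simp only [card_filter]
      rw [Equiv.sum_comp _ fun i => if r ≤ s i then 1 else 0,
        Equiv.sum_comp _ fun i => if r ≤ t i then 1 else 0]
      simpa only [card_filter] using h r
  calc ∑ i, f (s i) = ∑ i, f (s (Tuple.sort s i)) := (Equiv.sum_comp _ (f ∘ s)).symm
    _ ≤ ∑ i, f (t (Tuple.sort t i)) := sum_le_sum fun i _ => hf (hsorted i)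
    _ = ∑ i, f (t i) := Equiv.sum_comp _ (f ∘ t)

end Counting

section LinearAlgebra

variable {K V : Type*} [Field K] [AddCommGroup V] [Module K V]

theorem LinearIndependent.ncard_mem_le_finrank {ι : Type*} {v : ι → V}
    (hv : LinearIndependent K v) (W : Submodule K V) [Module.Finite K W] :
    {i | v i ∈ W}.ncard ≤ finrank K W := by
  have hvW : LinearIndependent K fun i : {i // v i ∈ W} => (⟨v i, i.2⟩ : W) :=
    .of_comp W.subtype (hv.comp _ Subtype.val_injective)
  have := hvW.finite
  have := Fintype.ofFinite {i // v i ∈ W}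
  rw [← Nat.card_coe_set_eq]
  exact (Nat.card_eq_fintype_card (α := {i // v i ∈ W})).trans_le hvW.fintype_card_le_finrank

theorem exists_basis_finrank_le_ncard_mem [FiniteDimensional K V] {n : ℕ}
    (hn : finrank K V = n) (W : Submodule K V) :
    ∃ e : Basis (Fin n) K V, finrank K W ≤ {i | e i ∈ W}.ncard := by
  let v := W.subtype ∘ finBasis K W
  have hv : LinearIndependent K v := (finBasis K W).linearIndependent.map' _ W.ker_subtype
  let b := Basis.extend hv.linearIndepOn_id
  have hvb (j) : v j ∈ hv.linearIndepOn_id.extend (Set.subset_univ _) :=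
    Basis.subset_extend _ (Set.mem_range_self j)
  let q := b.indexEquiv (finBasisOfFinrankEq K V hn)
  refine ⟨b.reindex q, ?_⟩
  calc finrank K W = (Set.univ : Set (Fin (finrank K W))).ncard := by simp
    _ ≤ {i | b.reindex q i ∈ W}.ncard :=
      Set.ncard_le_ncard_of_injOn (fun j => q ⟨v j, hvb j⟩)
        (fun j _ => by
          rw [Set.mem_ofPred_eq, Basis.reindex_apply, q.symm_apply_apply, Basis.extend_apply_self]
          exact (finBasis K W j).2)
        (fun _ _ _ _ h => hv.injective (Subtype.mk.inj (q.injective h))) (Set.toFinite _)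

end LinearAlgebra

section Filtration

variable {K V : Type*} [Field K] [AddCommGroup V] [Module K V] {F : ℝ → Submodule K V} {n : ℕ}

theorem filtIndex_eq_of_setOf_mem_eq_Iic {x : V} {a : ℝ} (h : {r | x ∈ F r} = Set.Iic a) :
    filtIndex F x = a := by
  rw [filtIndex, h]
  exact IsGreatest.csSup_eq (EReal.coe_strictMono.monotone.map_isGreatest isGreatest_Iic)

theorem le_toReal_filtIndex_iff (hF : Antitone F) (hsep : (⋂ r : ℝ, (F r : Set V)) = {0})
    (hexh : (⋃ r : ℝ, (F r : Set V)) = Set.univ) (hlc : ∀ r : ℝ, F r = ⨅ s < r, F s)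
    {x : V} (hx : x ≠ 0) (r : ℝ) :
    r ≤ (filtIndex F x).toReal ↔ x ∈ F r := by
  have hne : {r | x ∈ F r}.Nonempty := Set.iUnion_eq_univ_iff.1 hexh x
  have hbdd : BddAbove {r | x ∈ F r} := by
    obtain ⟨r₀, hr₀⟩ : ∃ r₀, x ∉ F r₀ := by
      by_contra! h
      exact hx (by simpa [hsep] using Set.mem_iInter.2 h)
    exact ⟨r₀, fun s hs => not_lt.1 fun h => hr₀ (hF h.le hs)⟩
  have hIic := eq_Iic_csSup_of_mem_iff_forall_lt hne hbdd fun r => by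
    rw [Set.mem_ofPred_eq, hlc r]
    simp only [Submodule.mem_iInf, Set.mem_ofPred_eq]
  rw [filtIndex_eq_of_setOf_mem_eq_Iic hIic, EReal.toReal_coe, ← Set.mem_Iic, ← hIic]
  rfl

theorem integral_basisMeasure (F : ℝ → Submodule K V) (e : Fin n → V) {f : ℝ → ℝ}
    (hf : Monotone f) (hb : ∃ C : ℝ, ∀ x, |f x| ≤ C) :
    ∫ x, f x ∂(basisMeasure F e) = (n : ℝ)⁻¹ * ∑ i, f (filtIndex F (e i)).toReal := by
  obtain ⟨C, hC⟩ := hb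
  have hint (a : ℝ) : Integrable f (Measure.dirac a) :=
    (integrable_const C).mono' hf.measurable.aestronglyMeasurable (.of_forall hC)
  rw [basisMeasure, integral_smul_measure, integral_finsetSum_measure fun i _ => hint _]
  simp [integral_dirac]

theorem measureRightOf_basisMeasure_iff (hn : 0 < n) (F : ℝ → Submodule K V) (e e' : Fin n → V) :
    MeasureRightOf (basisMeasure F e) (basisMeasure F e') ↔
      ∀ r : ℝ, #{i | r ≤ (filtIndex F (e' i)).toReal} ≤ #{i | r ≤ (filtIndex F (e i)).toReal} := by
  have hn' : (0 : ℝ) < (n : ℝ)⁻¹ := by positivity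
  constructor
  · intro h r
    have hmono : Monotone fun x : ℝ => if r ≤ x then (1 : ℝ) else 0 := fun a b hab => by
      dsimp only
      split_ifs <;> linarith
    have hbdd : ∃ C : ℝ, ∀ x, |if r ≤ x then (1 : ℝ) else 0| ≤ C :=
      ⟨1, fun x => by split_ifs <;> norm_num⟩
    have := h _ hmono hbdd
    rw [integral_basisMeasure F e hmono hbdd, integral_basisMeasure F e' hmono hbdd,
      sum_boole, sum_boole] at this
    exact_mod_cast le_of_mul_le_mul_left this hn'
  · intro h f hf hbdd
    rw [integral_basisMeasure F e hf hbdd, integral_basisMeasure F e' hf hbdd]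
    exact mul_le_mul_of_nonneg_left (sum_le_sum_of_card_le h hf) hn'.le

end Filtration

theorem stmt_6 {K V : Type*} [Field K] [AddCommGroup V] [Module K V] {n : ℕ}
    (hn : 0 < n) (F : ℝ → Submodule K V) (hF : Antitone F)
    (hsep : (⋂ r : ℝ, (F r : Set V)) = {0})
    (hexh : (⋃ r : ℝ, (F r : Set V)) = Set.univ)
    (hlc : ∀ r : ℝ, F r = ⨅ s < r, F s)
    (e : Module.Basis (Fin n) K V) :
    MaximalBasis F e ↔
      ∀ r : ℝ, {i : Fin n | e i ∈ F r}.ncard = Module.finrank K (F r) := by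
  have := Module.Finite.of_basis e
  have hcount (e' : Basis (Fin n) K V) (r : ℝ) :
      #{i | r ≤ (filtIndex F (e' i)).toReal} = {i | e' i ∈ F r}.ncard := by
    have hidx (i) := le_toReal_filtIndex_iff hF hsep hexh hlc (e'.ne_zero i) r
    rw [← Set.ncard_coe_finset]
    simp [hidx]
  simp only [MaximalBasis, measureRightOf_basisMeasure_iff hn, hcount]
  constructor
  · intro hmax r
    obtain ⟨e', he'⟩ := exists_basis_finrank_le_ncard_mem
      ((finrank_eq_card_basis e).trans (Fintype.card_fin n)) (F r)
    exact (e.linearIndependent.ncard_mem_le_finrank _).antisymm (he'.trans (hmax e' r))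
  · intro h e' r
    exact h r ▸ e'.linearIndependent.ncard_mem_le_finrank _
end

section
/- Let 0 → V' →^φ V →^ψ V'' → 0 be a short exact sequence of finite-dimensional vector spaces over a field K equipped with left-continuous ℝ-filtrations. Suppose that V is nonzero and its filtration F is separated and exhaustive, that the filtration of V' is the inverse image φ*F, and that the filtration of V'' is the strong direct image ψ_*F. Then ν_V = (dim V'/dim V)·ν_{V'} + (dim V''/dim V)·ν_{V''}. -/
open MeasureTheory
open scoped ENNReal

/-!
Subspaces of a finite-dimensional space satisfy the descending chain condition, so the
filtration `F` is constant on some interval `[s, r)`; by left continuity `F_r = F_s`, and the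
strong direct image is just `ψ(F_r)`. The exact sequence `0 → φ*F_r → F_r → ψ(F_r) → 0` then
gives `dim F_r = dim F'_r + dim F''_r`, i.e. both sides agree on every `[r, +∞)`, and finite
measures on `ℝ` agreeing on all such intervals are equal.
-/

theorem Antitone.exists_lt_forall_le_of_wellFoundedLT {ι α : Type*} [LinearOrder ι]
    [NoMinOrder ι] [Preorder α] [WellFoundedLT α] {F : ι → α} (hF : Antitone F) (r : ι) :
    ∃ s < r, ∀ t < r, F s ≤ F t := by
  obtain ⟨_, ⟨s, hs, rfl⟩, hmin⟩ :=
    wellFounded_lt.has_min (F '' Set.Iio r) (Set.nonempty_Iio.image F)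
  refine ⟨s, hs, fun t ht => ?_⟩
  have hle : F (max s t) ≤ F s := hF (le_max_left s t)
  have hge : F s ≤ F (max s t) := by
    by_contra h
    exact hmin _ ⟨max s t, max_lt hs ht, rfl⟩ (lt_of_le_not_ge hle h)
  exact hge.trans (hF (le_max_right s t))

theorem Monotone.map_iInf_lt_of_antitone {ι α β : Type*} [LinearOrder ι] [NoMinOrder ι]
    [CompleteLattice α] [WellFoundedLT α] [CompleteLattice β] {g : α → β} (hg : Monotone g)
    {F : ι → α} (hF : Antitone F) (r : ι) :
    g (⨅ t < r, F t) = ⨅ t < r, g (F t) := by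
  obtain ⟨s, hs, hmin⟩ := hF.exists_lt_forall_le_of_wellFoundedLT r
  have hF_inf : ⨅ t < r, F t = F s := le_antisymm (iInf₂_le s hs) (le_iInf₂ hmin)
  have hgF_inf : ⨅ t < r, g (F t) = g (F s) :=
    le_antisymm (iInf₂_le s hs) (le_iInf₂ fun t ht => hg (hmin t ht))
  rw [hF_inf, hgF_inf]

theorem Submodule.finrank_comap_add_finrank_map_of_exact {K V' V V'' : Type*} [DivisionRing K]
    [AddCommGroup V'] [Module K V'] [AddCommGroup V] [Module K V]
    [AddCommGroup V''] [Module K V''] {φ : V' →ₗ[K] V} {ψ : V →ₗ[K] V''}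
    (hφ : Function.Injective φ) (hexact : Function.Exact φ ψ)
    (W : Submodule K V) [FiniteDimensional K W] :
    Module.finrank K (W.comap φ) + Module.finrank K (W.map ψ) = Module.finrank K W := by
  have hcomap : Module.finrank K (W.comap φ) = Module.finrank K ↥(W ⊓ LinearMap.ker ψ) := by
    rw [(Submodule.equivMapOfInjective φ hφ _).finrank_eq, Submodule.map_comap_eq,
      LinearMap.exact_iff.1 hexact, inf_comm]
  have hrank := (ψ.domRestrict W).finrank_range_add_finrank_ker
  rwa [LinearMap.range_domRestrict, LinearMap.ker_domRestrict,
    ← Submodule.finrank_map_subtype_eq, Submodule.map_comap_subtype, ← hcomap, add_comm] at hrank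

theorem ENNReal.natCast_div_mul_natCast_div_cancel {m d : ℕ} (hdm : d ≤ m) (c : ℝ≥0∞) :
    (m : ℝ≥0∞) / c * (d / m) = d / c := by
  rw [div_eq_mul_inv (m : ℝ≥0∞), mul_right_comm,
    ENNReal.mul_div_cancel' (fun h => by simp_all) (absurd · (ENNReal.natCast_ne_top m)),
    div_eq_mul_inv]

theorem MeasureTheory.isFiniteMeasure_of_forall_measure_Ici_le {α : Type*} [MeasurableSpace α]
    [LinearOrder α] [Nonempty α] [(Filter.atBot : Filter α).IsCountablyGenerated]
    {μ : Measure α} {C : ℝ≥0∞} (hC : C ≠ ∞) (h : ∀ r, μ (Set.Ici r) ≤ C) :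
    IsFiniteMeasure μ :=
  ⟨(le_of_tendsto' (tendsto_measure_Ici_atBot μ) h).trans_lt hC.lt_top⟩

theorem stmt_8_general {K V' V V'' : Type*} [Field K]
    [AddCommGroup V'] [Module K V'] [AddCommGroup V] [Module K V]
    [AddCommGroup V''] [Module K V''] [FiniteDimensional K V]
    (φ : V' →ₗ[K] V) (ψ : V →ₗ[K] V'')
    (hφ : Function.Injective φ) (hψ : Function.Surjective ψ)
    (hexact : LinearMap.range φ = LinearMap.ker ψ)
    -- the filtration `F` of `V` is left continuous, separated and exhaustive
    (F : ℝ → Submodule K V) (hF : Antitone F)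
    (hlc : ∀ r : ℝ, F r = ⨅ s < r, F s)
    -- the filtration of `V'` is the inverse image `φ*F`
    (F' : ℝ → Submodule K V') (hF' : ∀ r : ℝ, F' r = (F r).comap φ)
    -- the filtration of `V''` is the strong direct image `ψ_*F`
    (F'' : ℝ → Submodule K V'') (hF'' : ∀ r : ℝ, F'' r = ⨅ s < r, (F s).map ψ)
    -- `μ`, `μ'`, `μ''` are the associated measures, characterised by
    -- `ν([r, +∞)) = dim (F_r) / dim`
    (μ μ' μ'' : Measure ℝ)
    (hμ : ∀ r : ℝ, μ (Set.Ici r)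
      = (Module.finrank K (F r) : ℝ≥0∞) / (Module.finrank K V : ℝ≥0∞))
    (hμ' : ∀ r : ℝ, μ' (Set.Ici r)
      = (Module.finrank K (F' r) : ℝ≥0∞) / (Module.finrank K V' : ℝ≥0∞))
    (hμ'' : ∀ r : ℝ, μ'' (Set.Ici r)
      = (Module.finrank K (F'' r) : ℝ≥0∞) / (Module.finrank K V'' : ℝ≥0∞)) :
    μ = ((Module.finrank K V' : ℝ≥0∞) / (Module.finrank K V : ℝ≥0∞)) • μ'
        + ((Module.finrank K V'' : ℝ≥0∞) / (Module.finrank K V : ℝ≥0∞)) • μ'' := by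
  have : FiniteDimensional K V' := .of_injective φ hφ
  have : FiniteDimensional K V'' := .of_surjective ψ hψ
  have hF''_map : ∀ r, F'' r = (F r).map ψ := fun r => by
    rw [hF'', hlc r, (Submodule.gc_map_comap ψ).monotone_l.map_iInf_lt_of_antitone hF]
  have hdim : ∀ r, Module.finrank K (F r) = Module.finrank K (F' r) + Module.finrank K (F'' r) :=
    fun r => by
      rw [hF', hF''_map, Submodule.finrank_comap_add_finrank_map_of_exact hφ
        (LinearMap.exact_iff.2 hexact.symm)]
  have : IsFiniteMeasure μ := isFiniteMeasure_of_forall_measure_Ici_le ENNReal.one_ne_top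
    fun r => by
      rw [hμ]
      exact ENNReal.div_le_of_le_mul (by simpa using Submodule.finrank_le (F r))
  refine Measure.ext_of_Ici μ _ fun r => ?_
  rw [Measure.add_apply, Measure.smul_apply, Measure.smul_apply, smul_eq_mul, smul_eq_mul,
    hμ, hμ', hμ'', ENNReal.natCast_div_mul_natCast_div_cancel (Submodule.finrank_le (F' r)),
    ENNReal.natCast_div_mul_natCast_div_cancel (Submodule.finrank_le (F'' r)), hdim r,
    Nat.cast_add, ENNReal.add_div]

theorem stmt_8 {K V' V V'' : Type*} [Field K]
    [AddCommGroup V'] [Module K V'] [AddCommGroup V] [Module K V]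
    [AddCommGroup V''] [Module K V''] [FiniteDimensional K V]
    (φ : V' →ₗ[K] V) (ψ : V →ₗ[K] V'')
    (hφ : Function.Injective φ) (hψ : Function.Surjective ψ)
    (hexact : LinearMap.range φ = LinearMap.ker ψ)
    (hV : Nontrivial V)
    -- the filtration `F` of `V` is left continuous, separated and exhaustive
    (F : ℝ → Submodule K V) (hF : Antitone F)
    (hlc : ∀ r : ℝ, F r = ⨅ s < r, F s)
    (hsep : (⋂ r : ℝ, (F r : Set V)) = {0})
    (hexh : (⋃ r : ℝ, (F r : Set V)) = Set.univ)
    -- the filtration of `V'` is the inverse image `φ*F`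
    (F' : ℝ → Submodule K V') (hF' : ∀ r : ℝ, F' r = (F r).comap φ)
    -- the filtration of `V''` is the strong direct image `ψ_*F`
    (F'' : ℝ → Submodule K V'') (hF'' : ∀ r : ℝ, F'' r = ⨅ s < r, (F s).map ψ)
    -- `μ`, `μ'`, `μ''` are the associated measures, characterised by
    -- `ν([r, +∞)) = dim (F_r) / dim`
    (μ μ' μ'' : Measure ℝ)
    (hμ : ∀ r : ℝ, μ (Set.Ici r)
      = (Module.finrank K (F r) : ℝ≥0∞) / (Module.finrank K V : ℝ≥0∞))
    (hμ' : ∀ r : ℝ, μ' (Set.Ici r)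
      = (Module.finrank K (F' r) : ℝ≥0∞) / (Module.finrank K V' : ℝ≥0∞))
    (hμ'' : ∀ r : ℝ, μ'' (Set.Ici r)
      = (Module.finrank K (F'' r) : ℝ≥0∞) / (Module.finrank K V'' : ℝ≥0∞)) :
    μ = ((Module.finrank K V' : ℝ≥0∞) / (Module.finrank K V : ℝ≥0∞)) • μ'
        + ((Module.finrank K V'' : ℝ≥0∞) / (Module.finrank K V : ℝ≥0∞)) • μ'' :=
  stmt_8_general φ ψ hφ hψ hexact F hF hlc F' hF' F'' hF'' μ μ' μ'' hμ hμ' hμ''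
end

section
/- Let (a_n)_{n≥1} be a sequence of nonnegative real numbers and f : ℤ_{>0} → ℝ a function with lim_{n→∞} f(n)/n = 0. Suppose there exists an integer n₀ > 0 such that for every integer l ≥ 2 and every tuple (n_1, …, n_l) of integers all ≥ n₀, one has a_{n_1 + ⋯ + n_l} ≤ a_{n_1} + ⋯ + a_{n_l} + f(n_1) + ⋯ + f(n_l). Then the sequence (a_n/n)_{n≥1} converges to a limit in ℝ_{≥0}. -/
/-!
Write `g m = a m + f m`. Because the hypothesis bounds `a` on a sum of arbitrarily many blocks at
once, the error terms `f` do not accumulate: cutting `n` into one block of length in `[m, 2m)` and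
`n / m - 1` blocks of length `m` gives `a n ≤ C_m + n * g m / m`, so `limsup a n / n ≤ g m / m`
for every `m ≥ n₀`. Conversely `a n / n = g n / n - f n / n`, and `f n / n → 0`, so
`liminf a n / n ≥ inf_{m ≥ n₀} g m / m`. The infimum is finite since `a ≥ 0` and `f n / n` is
bounded below.
-/

open Filter Topology

def AlmostSubadditive (a f : ℕ → ℝ) (n₀ : ℕ) : Prop :=
  ∀ l : ℕ, 2 ≤ l → ∀ ns : Fin l → ℕ, (∀ i, n₀ ≤ ns i) →
    a (∑ i, ns i) ≤ ∑ i, a (ns i) + ∑ i, f (ns i)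

namespace AlmostSubadditive

variable {a f : ℕ → ℝ} {n₀ : ℕ}

theorem apply_add_mul_le (h : AlmostSubadditive a f n₀) {r m : ℕ} (hr : n₀ ≤ r) (hm : n₀ ≤ m)
    (k : ℕ) : a (r + (k + 1) * m) ≤ a r + f r + (k + 1) * (a m + f m) := by
  have hblocks := h (k + 2) (by omega) (Fin.cons r fun _ => m)
    (Fin.cases hr fun _ => by simpa using hm)
  simp only [Fin.sum_univ_succ, Fin.cons_zero, Fin.cons_succ, Finset.sum_const, Finset.card_univ,
    Fintype.card_fin, smul_eq_mul, nsmul_eq_mul] at hblocks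
  push_cast at hblocks
  linarith

theorem exists_le_add_mul (h : AlmostSubadditive a f n₀) {m : ℕ} (hm : n₀ ≤ m) (hm0 : 0 < m) :
    ∃ C, ∀ n, 2 * m ≤ n → a n ≤ C + n * ((a m + f m) / m) := by
  set x := (a m + f m) / m
  set C₀ := ∑ j ∈ Finset.range m, |a (m + j) + f (m + j)|
  refine ⟨C₀ + 2 * m * |x|, fun n hn => ?_⟩
  obtain ⟨k, hk⟩ : ∃ k, n / m = k + 2 :=
    Nat.exists_eq_add_of_le' ((Nat.le_div_iff_mul_le hm0).mpr (by omega))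
  have hr : n % m < m := Nat.mod_lt n hm0
  have hn_eq : (m + n % m) + (k + 1) * m = n := by
    have hdiv := Nat.div_add_mod n m
    rw [hk] at hdiv
    linarith
  have hrem : a (m + n % m) + f (m + n % m) ≤ C₀ :=
    (le_abs_self _).trans <| Finset.single_le_sum (f := fun j => |a (m + j) + f (m + j)|)
      (fun _ _ => abs_nonneg _) (Finset.mem_range.mpr hr)
  have hblocks := h.apply_add_mul_le (by omega : n₀ ≤ m + n % m) hm k
  rw [hn_eq] at hblocks
  have hgm : (m : ℝ) * x = a m + f m := mul_div_cancel₀ _ (by positivity)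
  have hn_cast : ((m : ℝ) + (n % m : ℕ)) + (k + 1) * m = n := by exact_mod_cast hn_eq
  have hr_cast : ((n % m : ℕ) : ℝ) ≤ m := by exact_mod_cast hr.le
  have hfull : (k + 1) * (a m + f m) = n * x - (m + (n % m : ℕ)) * x := by
    rw [← hn_cast, ← hgm]; ring
  have : -(((m : ℝ) + (n % m : ℕ)) * x) ≤ 2 * m * |x| := by
    nlinarith [neg_abs_le x, abs_nonneg x, (Nat.cast_nonneg (n % m) : (0 : ℝ) ≤ _)]
  linarith

theorem eventually_div_lt (h : AlmostSubadditive a f n₀) {m : ℕ} (hm : n₀ ≤ m) (hm0 : 0 < m)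
    {u : ℝ} (hu : (a m + f m) / m < u) : ∀ᶠ n : ℕ in atTop, a n / n < u := by
  obtain ⟨C, hC⟩ := h.exists_le_add_mul hm hm0
  have hCn : ∀ᶠ n : ℕ in atTop, C / n < u - (a m + f m) / m :=
    (tendsto_const_div_atTop_nhds_zero_nat C).eventually (gt_mem_nhds (sub_pos.mpr hu))
  filter_upwards [hCn, eventually_ge_atTop (max (2 * m) 1)] with n hCn hn
  have hn0 : (0 : ℝ) < n := by exact_mod_cast (le_of_max_le_right hn)
  calc a n / n ≤ (C + n * ((a m + f m) / m)) / n :=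
        div_le_div_of_nonneg_right (hC n (le_of_max_le_left hn)) hn0.le
    _ = C / n + (a m + f m) / m := by field_simp
    _ < u := by linarith

theorem tendsto_div (h : AlmostSubadditive a f n₀) (ha : ∀ n, 1 ≤ n → 0 ≤ a n)
    (hf : Tendsto (fun n : ℕ => f n / n) atTop (𝓝 0)) :
    Tendsto (fun n : ℕ => a n / n) atTop
      (𝓝 (⨅ m : Set.Ici (max n₀ 1), (a m + f m) / m)) := by
  set L := ⨅ m : Set.Ici (max n₀ 1), (a m + f m) / m
  have hbdd : BddBelow (Set.range fun m : Set.Ici (max n₀ 1) => (a m + f m) / m) := by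
    obtain ⟨B, hB⟩ := hf.bddBelow_range
    refine ⟨B, ?_⟩
    rintro _ ⟨⟨m, hm⟩, rfl⟩
    have hm1 : 1 ≤ m := le_of_max_le_right hm
    have : 0 ≤ a m / m := div_nonneg (ha m hm1) (Nat.cast_nonneg m)
    have : B ≤ f m / m := hB ⟨m, rfl⟩
    simp only [add_div]
    linarith
  refine tendsto_order.2 ⟨fun l hl => ?_, fun u hu => ?_⟩
  · filter_upwards [hf.eventually (gt_mem_nhds (sub_pos.mpr hl)), eventually_ge_atTop (max n₀ 1)]
      with n hfn hn
    have : L ≤ (a n + f n) / n := ciInf_le hbdd ⟨n, hn⟩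
    rw [add_div] at this
    linarith
  · obtain ⟨⟨m, hm : max n₀ 1 ≤ m⟩, hmu⟩ := exists_lt_of_ciInf_lt hu
    exact h.eventually_div_lt (le_of_max_le_left hm) (le_of_max_le_right hm) hmu

end AlmostSubadditive

theorem stmt_9 (a : ℕ → ℝ) (ha : ∀ n : ℕ, 1 ≤ n → 0 ≤ a n)
    (f : ℕ → ℝ) (hf : Tendsto (fun n : ℕ => f n / n) atTop (nhds 0))
    (h : ∃ n₀ : ℕ, 0 < n₀ ∧ ∀ l : ℕ, 2 ≤ l → ∀ ns : Fin l → ℕ,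
      (∀ i, n₀ ≤ ns i) →
      a (∑ i, ns i) ≤ ∑ i, a (ns i) + ∑ i, f (ns i)) :
    ∃ L : ℝ, 0 ≤ L ∧ Tendsto (fun n : ℕ => a n / n) atTop (nhds L) := by
  obtain ⟨n₀, -, hsub⟩ := h
  have hlim := AlmostSubadditive.tendsto_div hsub ha hf
  refine ⟨_, ge_of_tendsto hlim ?_, hlim⟩
  filter_upwards [eventually_ge_atTop 1] with n hn
  exact div_nonneg (ha n hn) (Nat.cast_nonneg n)
end

section
/- Let (a_n)_{n≥1} be a sequence of real numbers and f : ℤ_{>0} → ℝ a function with lim_{n→∞} f(n)/n = 0. Suppose that: (1) there exists an integer n₀ > 0 such that for every integer l ≥ 2 and every tuple (n_1, …, n_l) of integers all ≥ n₀, one has a_{n_1 + ⋯ + n_l} ≥ a_{n_1} + ⋯ + a_{n_l} − f(n_1) − ⋯ − f(n_l); and (2) there exists a constant α > 0 such that a_n ≤ αn for all n ≥ 1. Then the sequence (a_n/n)_{n≥1} converges to a limit in ℝ. -/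
/-!
Put `g m = (a m - f m) / m`. Writing `n = r + q m` with `n₀ ≤ r < n₀ + m` and applying the
hypothesis to one copy of `r` and `q` copies of `m` gives `a n ≥ g m · n - O(1)`, so
`liminf a n / n ≥ g m` for every `m ≥ n₀`. On the other hand `a n / n = g n + f n / n` and
`f n / n → 0`, so `limsup a n / n ≤ sup_{m ≥ n₀} g m`, which is finite because `a n ≤ α n`.
-/

open Filter Set

def ApproxSuperadditive (a f : ℕ → ℝ) (n₀ : ℕ) : Prop :=
  ∀ l : ℕ, 2 ≤ l → ∀ ns : Fin l → ℕ, (∀ i, n₀ ≤ ns i) →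
    ∑ i, a (ns i) - ∑ i, f (ns i) ≤ a (∑ i, ns i)

theorem ApproxSuperadditive.sub_add_mul_le {a f : ℕ → ℝ} {n₀ : ℕ}
    (h : ApproxSuperadditive a f n₀) {r m q : ℕ} (hr : n₀ ≤ r) (hm : n₀ ≤ m) (hq : 1 ≤ q) :
    a r - f r + q * (a m - f m) ≤ a (r + q * m) := by
  have key := h (q + 1) (by omega) (Fin.cons r fun _ => m) (Fin.cases hr fun _ => hm)
  simp only [Fin.sum_univ_succ, Fin.cons_zero, Fin.cons_succ, Finset.sum_const,
    Finset.card_univ, Fintype.card_fin, nsmul_eq_mul, smul_eq_mul] at key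
  linarith

theorem Nat.exists_eq_add_mul_of_add_le {n₀ m n : ℕ} (hm : 0 < m) (hn : n₀ + m ≤ n) :
    ∃ r q, r ∈ Ico n₀ (n₀ + m) ∧ 1 ≤ q ∧ n = r + q * m := by
  refine ⟨n₀ + (n - n₀) % m, (n - n₀) / m, ⟨by omega, by have := Nat.mod_lt (n - n₀) hm; omega⟩,
    (Nat.one_le_div_iff hm).2 (by omega), ?_⟩
  have := Nat.mod_add_div (n - n₀) m
  rw [Nat.mul_comm] at this
  omega

theorem ApproxSuperadditive.exists_mul_add_le {a f : ℕ → ℝ} {n₀ : ℕ}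
    (h : ApproxSuperadditive a f n₀) {m : ℕ} (hm₀ : 0 < m) (hm : n₀ ≤ m) :
    ∃ B, ∀ n, n₀ + m ≤ n → (a m - f m) / m * n + B ≤ a n := by
  set c := (a m - f m) / m
  obtain ⟨B, hB⟩ := ((finite_Ico n₀ (n₀ + m)).image fun r => a r - f r - c * r).bddBelow
  refine ⟨B, fun n hn => ?_⟩
  obtain ⟨r, q, hr, hq, rfl⟩ := Nat.exists_eq_add_mul_of_add_le hm₀ hn
  have hBr : B ≤ a r - f r - c * r := hB ⟨r, hr, rfl⟩
  have hcm : c * m = a m - f m := div_mul_cancel₀ _ (by positivity)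
  clear_value c
  have hsplit := h.sub_add_mul_le hr.1 hm hq
  push_cast
  linear_combination hBr + hsplit + (q : ℝ) * hcm

theorem eventually_sub_le_div_of_eventually_mul_add_le {u : ℕ → ℝ} {c B ε : ℝ}
    (h : ∀ᶠ n in atTop, c * n + B ≤ u n) (hε : 0 < ε) :
    ∀ᶠ n : ℕ in atTop, c - ε ≤ u n / n := by
  have hB : ∀ᶠ n : ℕ in atTop, -ε < B / n :=
    (tendsto_const_div_atTop_nhds_zero_nat B).eventually_const_lt (neg_neg_iff_pos.2 hε)
  filter_upwards [h, hB, eventually_ge_atTop 1] with n hn hBn hn₁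
  have hn₀ : (0 : ℝ) < n := by exact_mod_cast hn₁
  calc c - ε ≤ c + B / n := by linarith
    _ = (c * n + B) / n := by field_simp
    _ ≤ u n / n := by gcongr

theorem tendsto_csSup_image_Ici_of_eventually {u g : ℕ → ℝ} {n₀ : ℕ} {α : ℝ}
    (hbdd : ∀ᶠ n in atTop, u n ≤ α)
    (hlow : ∀ m, n₀ ≤ m → ∀ ε > 0, ∀ᶠ n in atTop, g m - ε ≤ u n)
    (hup : ∀ ε > 0, ∀ᶠ n in atTop, u n ≤ g n + ε) :
    Tendsto u atTop (nhds (sSup (g '' Ici n₀))) := by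
  have hg : ∀ m, n₀ ≤ m → g m ≤ α := fun m hm => le_of_forall_pos_le_add fun ε hε => by
    obtain ⟨n, hlow_n, hbdd_n⟩ := ((hlow m hm ε hε).and hbdd).exists
    linarith
  have hne : (g '' Ici n₀).Nonempty := ⟨g n₀, n₀, self_mem_Ici, rfl⟩
  have hbddS : BddAbove (g '' Ici n₀) := ⟨α, by rintro _ ⟨m, hm, rfl⟩; exact hg m hm⟩
  refine tendsto_order.2 ⟨fun b hb => ?_, fun b hb => ?_⟩
  · obtain ⟨_, ⟨m, hm, rfl⟩, hbm⟩ := exists_lt_of_lt_csSup hne hb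
    filter_upwards [hlow m hm _ (half_pos (sub_pos.2 hbm))] with n hn
    linarith
  · filter_upwards [hup _ (half_pos (sub_pos.2 hb)), eventually_ge_atTop n₀] with n hn hn₀
    linarith [le_csSup hbddS (mem_image_of_mem g (mem_Ici.2 hn₀))]

theorem stmt_10 (a : ℕ → ℝ)
    (f : ℕ → ℝ) (hf : Tendsto (fun n : ℕ => f n / n) atTop (nhds 0))
    (h1 : ∃ n₀ : ℕ, 0 < n₀ ∧ ∀ l : ℕ, 2 ≤ l → ∀ ns : Fin l → ℕ,
      (∀ i, n₀ ≤ ns i) →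
      ∑ i, a (ns i) - ∑ i, f (ns i) ≤ a (∑ i, ns i))
    (h2 : ∃ α : ℝ, 0 < α ∧ ∀ n : ℕ, 1 ≤ n → a n ≤ α * n) :
    ∃ L : ℝ, Tendsto (fun n : ℕ => a n / n) atTop (nhds L) := by
  obtain ⟨n₀, hn₀, hsup : ApproxSuperadditive a f n₀⟩ := h1
  obtain ⟨α, -, hα⟩ := h2
  refine ⟨_, tendsto_csSup_image_Ici_of_eventually (n₀ := n₀) (α := α)
    (g := fun m => (a m - f m) / m) ?bdd ?low ?up⟩
  case bdd =>
    filter_upwards [eventually_ge_atTop 1] with n hn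
    rw [div_le_iff₀ (by exact_mod_cast hn)]
    exact hα n hn
  case low =>
    intro m hm ε hε
    obtain ⟨B, hB⟩ := hsup.exists_mul_add_le (hn₀.trans_le hm) hm
    exact eventually_sub_le_div_of_eventually_mul_add_le
      (eventually_atTop.2 ⟨n₀ + m, hB⟩) hε
  case up =>
    intro ε hε
    filter_upwards [hf.eventually_lt_const hε] with n hn
    rw [sub_div] at *
    linarith
end

section
/- Let (f_n)_{n≥1} be a sequence of right-continuous decreasing functions ℝ → [0,1] such that: (i) sup_{n≥1} inf{x : f_n(x) = 0} < +∞ and inf_{n≥1} sup{x : f_n(x) = 1} > −∞; (ii) there exists a countable set Z ⊂ ℝ such that (f_n(x))_{n≥1} converges for every x ∈ ℝ \ Z. Let f : ℝ → [0,1] be a right-continuous function with f(x) = lim_n f_n(x) for all x ∈ ℝ \ Z. Then: (1) f is decreasing; (2) writing A = liminf_n inf{x : f_n(x) = 0} and B = limsup_n sup{x : f_n(x) = 1}, one has f ≡ 0 on (A, +∞) and f ≡ 1 on (−∞, B); (3) there exists a countable subset Z' of (0,1) such that (f_n*(t))_{n≥1} converges to f*(t) for every t ∈ (0,1) \ Z';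 (4) the sequence of functions t ↦ ∫_0^t f_n*(s) ds converges uniformly on [0,1] to t ↦ ∫_0^t f*(s) ds. -/
/-!
Off the countable set `Z` the limit inherits monotonicity and the values `0` and `1` from the
`f n`; as `Zᶜ` is dense, right continuity spreads this to all of `ℝ`. For the quasi-inverses:
if `x < flim* t`, some `z > x` outside `Z` has `t < flim z`, hence `t < f n z` and `z ≤ f n* t`
eventually; if `flim* s < x` for some `s < t`, some `z < x` outside `Z` has `flim z ≤ s < t`,
hence `f n* t ≤ z` eventually. So `f n* t → flim* t` wherever `flim*` is left continuous, i.e.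
off the countable discontinuity set of the monotone `flim*`. All quasi-inverses take values in a
fixed `[L, U]` on `(0,1)`, so dominated convergence gives `L¹` convergence on `[0,1]`, which
controls the primitives uniformly.
-/

open Filter

/-- The quasi-inverse of a right-continuous decreasing function `f : ℝ → [0,1]`:
`f*(t) = sup {x ∈ ℝ : f x > t}`. -/
noncomputable def quasiInverse (f : ℝ → ℝ) (t : ℝ) : ℝ :=
  sSup {x : ℝ | t < f x}

open Set MeasureTheory Topology

theorem Dense.mem_closure_Ioo_inter {D : Set ℝ} (hD : Dense D) {a b : ℝ} (hab : a < b) :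
    a ∈ closure (Ioo a b ∩ D) := by
  have : closure (Ioo a b) ⊆ closure (Ioo a b ∩ D) :=
    closure_minimal (hD.open_subset_closure_inter isOpen_Ioo) isClosed_closure
  exact this (by rw [closure_Ioo hab.ne]; exact left_mem_Icc.2 hab.le)

theorem antitone_of_antitoneOn_dense {D : Set ℝ} (hD : Dense D) {g : ℝ → ℝ}
    (hrc : ∀ x, ContinuousWithinAt g (Ici x) x) (hg : AntitoneOn g D) : Antitone g := by
  have hle_of_lt : ∀ x, ∀ z ∈ D, x < z → g z ≤ g x := fun x z hz hxz =>
    ContinuousWithinAt.closure_le (hD.mem_closure_Ioo_inter hxz) continuousWithinAt_const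
      ((hrc x).mono fun w hw => hw.1.1.le) fun w hw => hg hw.2 hz hw.1.2.le
  intro x y hxy
  exact ContinuousWithinAt.closure_le (hD.mem_closure_Ioo_inter (lt_add_one y))
    ((hrc y).mono fun w hw => hw.1.1.le) continuousWithinAt_const
    fun z hz => hle_of_lt x z hz.2 (hxy.trans_lt hz.1.1)

theorem Antitone.eqOn_zero_Ici {h : ℝ → ℝ} (hh : Antitone h) (h0 : ∀ x, 0 ≤ h x) {a : ℝ}
    (ha : h a = 0) : EqOn h 0 (Ici a) :=
  fun _ hx => le_antisymm ((hh hx).trans_eq ha) (h0 _)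

theorem Antitone.eqOn_one_Iic {h : ℝ → ℝ} (hh : Antitone h) (h1 : ∀ x, h x ≤ 1) {a : ℝ}
    (ha : h a = 1) : EqOn h 1 (Iic a) :=
  fun _ hx => le_antisymm (h1 _) (ha.symm.trans_le (hh hx))

section QuasiInverse

variable {h : ℝ → ℝ} {L U t x : ℝ}

theorem bddAbove_setOf_lt (h0 : EqOn h 0 (Ioi U)) (ht : 0 ≤ t) : BddAbove {x | t < h x} :=
  ⟨U, fun x hx => not_lt.1 fun hUx => (hx.trans_eq (h0 hUx : h x = 0)).not_ge ht⟩

theorem Iio_subset_setOf_lt (h1 : EqOn h 1 (Iio L)) (ht : t < 1) : Iio L ⊆ {x | t < h x} :=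
  fun _ hx => ht.trans_eq (h1 hx : h _ = 1).symm

theorem le_quasiInverse (h0 : EqOn h 0 (Ioi U)) (ht : 0 ≤ t) (hx : t < h x) :
    x ≤ quasiInverse h t :=
  le_csSup (bddAbove_setOf_lt h0 ht) hx

theorem quasiInverse_le (hh : Antitone h) (h1 : EqOn h 1 (Iio L)) (ht : t < 1) (hx : h x ≤ t) :
    quasiInverse h t ≤ x :=
  csSup_le ((nonempty_Iio (a := L)).mono (Iio_subset_setOf_lt h1 ht)) fun _ hy =>
    not_lt.1 fun hxy => (hy.trans_le (hh hxy.le)).not_ge hx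

theorem quasiInverse_mem_Icc (h0 : EqOn h 0 (Ioi U)) (h1 : EqOn h 1 (Iio L))
    (ht : t ∈ Ioo 0 1) : quasiInverse h t ∈ Icc L U := by
  have hne : {x | t < h x}.Nonempty := nonempty_Iio.mono (Iio_subset_setOf_lt h1 ht.2)
  refine ⟨?_, csSup_le hne fun x hx => not_lt.1 fun hUx => ?_⟩
  · rw [← csSup_Iio (a := L)]
    exact csSup_le_csSup (bddAbove_setOf_lt h0 ht.1.le) nonempty_Iio (Iio_subset_setOf_lt h1 ht.2)
  · exact (hx.trans_eq (h0 hUx : h x = 0)).not_gt ht.1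

theorem antitoneOn_quasiInverse (h0 : EqOn h 0 (Ioi U)) (h1 : EqOn h 1 (Iio L)) :
    AntitoneOn (quasiInverse h) (Ioo 0 1) := fun _ hs _ ht hst =>
  csSup_le_csSup (bddAbove_setOf_lt h0 hs.1.le)
    (nonempty_Iio.mono (Iio_subset_setOf_lt h1 ht.2)) fun _ hx => hst.trans_lt hx

theorem aestronglyMeasurable_quasiInverse (h0 : EqOn h 0 (Ioi U)) (h1 : EqOn h 1 (Iio L)) :
    AEStronglyMeasurable (quasiInverse h) (volume.restrict (Ioc 0 1)) := by
  rw [← Measure.restrict_congr_set Ioo_ae_eq_Ioc]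
  exact (aemeasurable_restrict_of_antitoneOn measurableSet_Ioo
    (antitoneOn_quasiInverse h0 h1)).aestronglyMeasurable

theorem ae_norm_quasiInverse_le (h0 : EqOn h 0 (Ioi U)) (h1 : EqOn h 1 (Iio L)) :
    ∀ᵐ t ∂volume.restrict (Ioc 0 1), ‖quasiInverse h t‖ ≤ max |L| |U| := by
  rw [← Measure.restrict_congr_set Ioo_ae_eq_Ioc]
  exact ae_restrict_of_forall_mem measurableSet_Ioo fun t ht =>
    abs_le_max_abs_abs (quasiInverse_mem_Icc h0 h1 ht).1 (quasiInverse_mem_Icc h0 h1 ht).2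

end QuasiInverse

section PointwiseLimit

variable {f : ℕ → ℝ → ℝ} {g : ℝ → ℝ} {D : Set ℝ}
  (hD : Dense D) (hconv : ∀ x ∈ D, Tendsto (fun n => f n x) atTop (𝓝 (g x)))
include hD hconv

theorem eqOn_zero_Ioi_of_frequently (hg : Antitone g) (hg_nonneg : ∀ x, 0 ≤ g x) {c : ℝ}
    (hf : ∃ᶠ n in atTop, EqOn (f n) 0 (Ioi c)) : EqOn g 0 (Ioi c) := by
  intro x hx
  obtain ⟨y, hyD, hy⟩ := hD.exists_between hx
  have hgy : g y = 0 :=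
    tendsto_nhds_unique_of_frequently_eq (hconv y hyD) tendsto_const_nhds
      (hf.mono fun n hn => hn hy.1)
  exact le_antisymm ((hg hy.2.le).trans_eq hgy) (hg_nonneg x)

theorem eqOn_one_Iio_of_frequently (hg : Antitone g) (hg_le_one : ∀ x, g x ≤ 1) {c : ℝ}
    (hf : ∃ᶠ n in atTop, EqOn (f n) 1 (Iio c)) : EqOn g 1 (Iio c) := by
  intro x hx
  obtain ⟨y, hyD, hy⟩ := hD.exists_between hx
  have hgy : g y = 1 :=
    tendsto_nhds_unique_of_frequently_eq (hconv y hyD) tendsto_const_nhds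
      (hf.mono fun n hn => hn hy.2)
  exact le_antisymm (hg_le_one x) (hgy.symm.trans_le (hg hy.1.le))

theorem eq_zero_of_liminf_sInf_lt (hanti : ∀ n, Antitone (f n)) (hf_nonneg : ∀ n x, 0 ≤ f n x)
    (hg : Antitone g) (hg_nonneg : ∀ x, 0 ≤ g x) {x : ℝ}
    (hx : liminf (fun n => sInf ((fun y : ℝ => (y : EReal)) '' {y : ℝ | f n y = 0})) atTop
      < (x : EReal)) : g x = 0 := by
  obtain ⟨c, hlt, hcx⟩ := EReal.exists_between_coe_real hx
  refine eqOn_zero_Ioi_of_frequently hD hconv hg hg_nonneg ?_ (EReal.coe_lt_coe_iff.1 hcx)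
  refine (frequently_lt_of_liminf_lt (h := hlt)).mono fun n hn => ?_
  obtain ⟨_, ⟨y, hy, rfl⟩, hyc⟩ := sInf_lt_iff.1 hn
  exact ((hanti n).eqOn_zero_Ici (hf_nonneg n) hy).mono
    (Ioi_subset_Ici (EReal.coe_lt_coe_iff.1 hyc).le)

theorem eq_one_of_lt_limsup_sSup (hanti : ∀ n, Antitone (f n)) (hf_le_one : ∀ n x, f n x ≤ 1)
    (hg : Antitone g) (hg_le_one : ∀ x, g x ≤ 1) {x : ℝ}
    (hx : (x : EReal)
      < limsup (fun n => sSup ((fun y : ℝ => (y : EReal)) '' {y : ℝ | f n y = 1})) atTop) :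
    g x = 1 := by
  obtain ⟨c, hxc, hlt⟩ := EReal.exists_between_coe_real hx
  refine eqOn_one_Iio_of_frequently hD hconv hg hg_le_one ?_ (EReal.coe_lt_coe_iff.1 hxc)
  refine (frequently_lt_of_lt_limsup (h := hlt)).mono fun n hn => ?_
  obtain ⟨_, ⟨y, hy, rfl⟩, hcy⟩ := lt_sSup_iff.1 hn
  exact ((hanti n).eqOn_one_Iic (hf_le_one n) hy).mono
    (Iio_subset_Iic (EReal.coe_lt_coe_iff.1 hcy).le)

variable {L U t x : ℝ}

theorem eventually_lt_quasiInverse (hf0 : ∀ n, EqOn (f n) 0 (Ioi U)) (hg : Antitone g)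
    (hg1 : EqOn g 1 (Iio L)) (ht : t ∈ Ioo 0 1)
    (hx : x < quasiInverse g t) : ∀ᶠ n in atTop, x < quasiInverse (f n) t := by
  obtain ⟨y, hy, hxy⟩ :=
    exists_lt_of_lt_csSup (nonempty_Iio.mono (Iio_subset_setOf_lt hg1 ht.2)) hx
  obtain ⟨z, hzD, hz⟩ := hD.exists_between hxy
  filter_upwards [(hconv z hzD).eventually (lt_mem_nhds (hy.trans_le (hg hz.2.le)))] with n hn
  exact hz.1.trans_le (le_quasiInverse (hf0 n) ht.1.le hn)

theorem eventually_quasiInverse_lt (hanti : ∀ n, Antitone (f n))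
    (hf1 : ∀ n, EqOn (f n) 1 (Iio L)) (hg0 : EqOn g 0 (Ioi U)) {s : ℝ} (hs : 0 < s)
    (hst : s < t) (ht : t < 1) (hx : quasiInverse g s < x) :
    ∀ᶠ n in atTop, quasiInverse (f n) t < x := by
  obtain ⟨z, hzD, hz⟩ := hD.exists_between hx
  have hgz : g z ≤ s := not_lt.1 fun h => (le_quasiInverse hg0 hs.le h).not_gt hz.1
  filter_upwards [(hconv z hzD).eventually (gt_mem_nhds (hgz.trans_lt hst))] with n hn
  exact (quasiInverse_le (hanti n) (hf1 n) ht hn.le).trans_lt hz.2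

theorem tendsto_quasiInverse_of_continuousWithinAt (hanti : ∀ n, Antitone (f n))
    (hf0 : ∀ n, EqOn (f n) 0 (Ioi U)) (hf1 : ∀ n, EqOn (f n) 1 (Iio L)) (hg : Antitone g)
    (hg0 : EqOn g 0 (Ioi U)) (hg1 : EqOn g 1 (Iio L)) (ht : t ∈ Ioo 0 1)
    (hcont : ContinuousWithinAt (quasiInverse g) (Iio t) t) :
    Tendsto (fun n => quasiInverse (f n) t) atTop (𝓝 (quasiInverse g t)) := by
  refine tendsto_order.2 ⟨fun x hx => eventually_lt_quasiInverse hD hconv hf0 hg hg1 ht hx,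
    fun x hx => ?_⟩
  obtain ⟨s, hsx, hs⟩ := ((hcont.eventually (gt_mem_nhds hx)).and (Ioo_mem_nhdsLT ht.1)).exists
  exact eventually_quasiInverse_lt hD hconv hanti hf1 hg0 hs.1 hs.2 ht.2 hsx

end PointwiseLimit

theorem tendstoUniformlyOn_intervalIntegral_of_tendsto_ae {E : Type*} [NormedAddCommGroup E]
    [NormedSpace ℝ E] {F : ℕ → ℝ → E} {f : ℝ → E} {a b C : ℝ}
    (hF_meas : ∀ n, AEStronglyMeasurable (F n) (volume.restrict (Ioc a b)))
    (hF_bound : ∀ n, ∀ᵐ x ∂volume.restrict (Ioc a b), ‖F n x‖ ≤ C)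
    (hlim : ∀ᵐ x ∂volume.restrict (Ioc a b), Tendsto (fun n => F n x) atTop (𝓝 (f x))) :
    TendstoUniformlyOn (fun n t => ∫ s in a..t, F n s) (fun t => ∫ s in a..t, f s) atTop
      (Icc a b) := by
  have hf_meas : AEStronglyMeasurable f (volume.restrict (Ioc a b)) :=
    aestronglyMeasurable_of_tendsto_ae atTop hF_meas hlim
  have hf_bound : ∀ᵐ x ∂volume.restrict (Ioc a b), ‖f x‖ ≤ C := by
    filter_upwards [hlim, ae_all_iff.2 hF_bound] with x hx hxC
    exact le_of_tendsto' hx.norm hxC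
  have hF_int : ∀ n, IntegrableOn (F n) (Ioc a b) := fun n =>
    Integrable.of_bound (hF_meas n) C (hF_bound n)
  have hf_int : IntegrableOn f (Ioc a b) := Integrable.of_bound hf_meas C hf_bound
  have hL1 : Tendsto (fun n => ∫ x in Ioc a b, ‖F n x - f x‖) atTop (𝓝 0) := by
    have := tendsto_integral_of_dominated_convergence (fun _ => C + C)
      (fun n => ((hF_meas n).sub hf_meas).norm) (integrable_const _)
      (fun n => by
        filter_upwards [hF_bound n, hf_bound] with x hFx hfx
        exact (norm_norm _).trans_le ((norm_sub_le _ _).trans (add_le_add hFx hfx)))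
      (by filter_upwards [hlim] with x hx using by simpa using (hx.sub_const (f x)).norm)
    simpa using this
  rw [Metric.tendstoUniformlyOn_iff]
  intro ε hε
  filter_upwards [hL1.eventually (gt_mem_nhds hε)] with n hn t ht
  have hsub : Ioc a t ⊆ Ioc a b := Ioc_subset_Ioc_right ht.2
  have hFt : IntervalIntegrable (F n) volume a t :=
    (intervalIntegrable_iff_integrableOn_Ioc_of_le ht.1).2 ((hF_int n).mono_set hsub)
  have hft : IntervalIntegrable f volume a t :=
    (intervalIntegrable_iff_integrableOn_Ioc_of_le ht.1).2 (hf_int.mono_set hsub)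
  calc dist (∫ s in a..t, f s) (∫ s in a..t, F n s) = ‖∫ s in a..t, F n s - f s‖ := by
        rw [dist_comm, dist_eq_norm, intervalIntegral.integral_sub hFt hft]
    _ ≤ ∫ s in Ioc a t, ‖F n s - f s‖ := by
        rw [← intervalIntegral.integral_of_le ht.1]
        exact intervalIntegral.norm_integral_le_integral_norm ht.1
    _ ≤ ∫ s in Ioc a b, ‖F n s - f s‖ :=
        setIntegral_mono_set ((hF_int n).sub hf_int).norm
          (Eventually.of_forall fun _ => norm_nonneg _) hsub.eventuallyLE
    _ < ε := hn

theorem stmt_18_general (f : ℕ → ℝ → ℝ) (flim : ℝ → ℝ)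
    -- the `f n` are right-continuous decreasing functions valued in `[0,1]`
    (hval : ∀ n x, f n x ∈ Set.Icc (0 : ℝ) 1)
    (hanti : ∀ n, Antitone (f n))
    -- (i) `sup_n inf {x : f n x = 0} < +∞` and `inf_n sup {x : f n x = 1} > -∞`
    (hU : ∃ U : ℝ, ∀ n, ∃ x : ℝ, x ≤ U ∧ f n x = 0)
    (hL : ∃ L : ℝ, ∀ n, ∃ x : ℝ, L ≤ x ∧ f n x = 1)
    -- (ii) convergence outside a countable set `Z`, with limit `flim`
    (Z : Set ℝ) (hZ : Z.Countable)
    (hconv : ∀ x : ℝ, x ∉ Z → Tendsto (fun n => f n x) atTop (nhds (flim x)))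
    -- `flim : ℝ → [0,1]` is right continuous
    (hlval : ∀ x, flim x ∈ Set.Icc (0 : ℝ) 1)
    (hlrc : ∀ x : ℝ, ContinuousWithinAt flim (Set.Ici x) x) :
    -- (1) `flim` is decreasing
    Antitone flim ∧
    -- (2) `flim ≡ 0` on `(A, +∞)` and `flim ≡ 1` on `(-∞, B)`
    ((∀ x : ℝ,
        liminf (fun n => sInf ((fun y : ℝ => (y : EReal)) '' {y : ℝ | f n y = 0})) atTop
          < (x : EReal) → flim x = 0) ∧
     (∀ x : ℝ,
        (x : EReal)
          < limsup (fun n => sSup ((fun y : ℝ => (y : EReal)) '' {y : ℝ | f n y = 1})) atTop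
          → flim x = 1)) ∧
    -- (3) convergence of the quasi-inverses outside a countable subset of `(0,1)`
    (∃ Z' : Set ℝ, Z' ⊆ Set.Ioo 0 1 ∧ Z'.Countable ∧
      ∀ t ∈ Set.Ioo (0 : ℝ) 1 \ Z',
        Tendsto (fun n => quasiInverse (f n) t) atTop (nhds (quasiInverse flim t))) ∧
    -- (4) uniform convergence of the primitives of the quasi-inverses on `[0,1]`
    TendstoUniformlyOn (fun n t => ∫ s in (0 : ℝ)..t, quasiInverse (f n) s)
      (fun t => ∫ s in (0 : ℝ)..t, quasiInverse flim s) atTop (Set.Icc 0 1) := by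
  obtain ⟨U, hU⟩ := hU
  obtain ⟨L, hL⟩ := hL
  have hD : Dense Zᶜ := hZ.dense_compl ℝ
  have hf0 : ∀ n, EqOn (f n) 0 (Ioi U) := fun n => by
    obtain ⟨x, hxU, hx⟩ := hU n
    exact ((hanti n).eqOn_zero_Ici (fun y => (hval n y).1) hx).mono (Ioi_subset_Ici hxU)
  have hf1 : ∀ n, EqOn (f n) 1 (Iio L) := fun n => by
    obtain ⟨x, hLx, hx⟩ := hL n
    exact ((hanti n).eqOn_one_Iic (fun y => (hval n y).2) hx).mono (Iio_subset_Iic hLx)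
  have hg : Antitone flim := antitone_of_antitoneOn_dense hD hlrc fun x hx y hy hxy =>
    le_of_tendsto_of_tendsto' (hconv y hy) (hconv x hx) fun n => hanti n hxy
  have hg0 : EqOn flim 0 (Ioi U) := eqOn_zero_Ioi_of_frequently hD hconv hg
    (fun x => (hlval x).1) (Eventually.of_forall hf0).frequently
  have hg1 : EqOn flim 1 (Iio L) := eqOn_one_Iio_of_frequently hD hconv hg
    (fun x => (hlval x).2) (Eventually.of_forall hf1).frequently
  set Z' := {t ∈ Ioo (0 : ℝ) 1 | ¬ContinuousWithinAt (quasiInverse flim) (Ioo 0 1) t}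
  have hZ' : Z'.Countable := (antitoneOn_quasiInverse hg0 hg1).countable_not_continuousWithinAt
  have hlim : ∀ t ∈ Ioo (0 : ℝ) 1 \ Z',
      Tendsto (fun n => quasiInverse (f n) t) atTop (𝓝 (quasiInverse flim t)) := by
    rintro t ⟨ht, htZ'⟩
    have hcont : ContinuousAt (quasiInverse flim) t :=
      (not_not.1 fun h => htZ' ⟨ht, h⟩).continuousAt (Ioo_mem_nhds ht.1 ht.2)
    exact tendsto_quasiInverse_of_continuousWithinAt hD hconv hanti hf0 hf1 hg hg0 hg1 ht
      hcont.continuousWithinAt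
  refine ⟨hg,
    ⟨fun _ => eq_zero_of_liminf_sInf_lt hD hconv hanti (fun n x => (hval n x).1) hg
      (fun x => (hlval x).1),
     fun _ => eq_one_of_lt_limsup_sSup hD hconv hanti (fun n x => (hval n x).2) hg
      (fun x => (hlval x).2)⟩,
    ⟨Z', sep_subset _ _, hZ', hlim⟩, ?_⟩
  refine tendstoUniformlyOn_intervalIntegral_of_tendsto_ae
    (fun n => aestronglyMeasurable_quasiInverse (hf0 n) (hf1 n))
    (fun n => ae_norm_quasiInverse_le (hf0 n) (hf1 n)) ?_
  rw [← Measure.restrict_congr_set Ioo_ae_eq_Ioc]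
  filter_upwards [ae_restrict_mem measurableSet_Ioo, ae_restrict_of_ae (hZ'.ae_notMem volume)]
    with t ht htZ' using hlim t ⟨ht, htZ'⟩

theorem stmt_18 (f : ℕ → ℝ → ℝ) (flim : ℝ → ℝ)
    -- the `f n` are right-continuous decreasing functions valued in `[0,1]`
    (hval : ∀ n x, f n x ∈ Set.Icc (0 : ℝ) 1)
    (hanti : ∀ n, Antitone (f n))
    (hrc : ∀ n (x : ℝ), ContinuousWithinAt (f n) (Set.Ici x) x)
    -- (i) `sup_n inf {x : f n x = 0} < +∞` and `inf_n sup {x : f n x = 1} > -∞`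
    (hU : ∃ U : ℝ, ∀ n, ∃ x : ℝ, x ≤ U ∧ f n x = 0)
    (hL : ∃ L : ℝ, ∀ n, ∃ x : ℝ, L ≤ x ∧ f n x = 1)
    -- (ii) convergence outside a countable set `Z`, with limit `flim`
    (Z : Set ℝ) (hZ : Z.Countable)
    (hconv : ∀ x : ℝ, x ∉ Z → Tendsto (fun n => f n x) atTop (nhds (flim x)))
    -- `flim : ℝ → [0,1]` is right continuous
    (hlval : ∀ x, flim x ∈ Set.Icc (0 : ℝ) 1)
    (hlrc : ∀ x : ℝ, ContinuousWithinAt flim (Set.Ici x) x) :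
    -- (1) `flim` is decreasing
    Antitone flim ∧
    -- (2) `flim ≡ 0` on `(A, +∞)` and `flim ≡ 1` on `(-∞, B)`
    ((∀ x : ℝ,
        liminf (fun n => sInf ((fun y : ℝ => (y : EReal)) '' {y : ℝ | f n y = 0})) atTop
          < (x : EReal) → flim x = 0) ∧
     (∀ x : ℝ,
        (x : EReal)
          < limsup (fun n => sSup ((fun y : ℝ => (y : EReal)) '' {y : ℝ | f n y = 1})) atTop
          → flim x = 1)) ∧
    -- (3) convergence of the quasi-inverses outside a countable subset of `(0,1)`
    (∃ Z' : Set ℝ, Z' ⊆ Set.Ioo 0 1 ∧ Z'.Countable ∧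
      ∀ t ∈ Set.Ioo (0 : ℝ) 1 \ Z',
        Tendsto (fun n => quasiInverse (f n) t) atTop (nhds (quasiInverse flim t))) ∧
    -- (4) uniform convergence of the primitives of the quasi-inverses on `[0,1]`
    TendstoUniformlyOn (fun n t => ∫ s in (0 : ℝ)..t, quasiInverse (f n) s)
      (fun t => ∫ s in (0 : ℝ)..t, quasiInverse flim s) atTop (Set.Icc 0 1) :=
  stmt_18_general f flim hval hanti hU hL Z hZ hconv hlval hlrc
end

section
/- Let (b_n)_{n≥1} be a sequence of nonnegative real numbers and f : ℤ_{>0} → ℝ_{≥0} an increasing function such that Σ_{α≥1} f(2^α)/2^α < +∞. If there exists an integer n₀ > 0 such that b_{n+m} ≤ b_n + b_m + f(n) + f(m) for every pair (m, n) of integers both ≥ n₀, then the sequence (b_n/n)_{n≥1} converges to a limit in ℝ_{≥0}. -/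
/-!
Splitting `q * n` into two nearly equal multiples of `n` repeatedly, `j` times when
`q ≤ 2 ^ j`, the approximate subadditivity gives
`b (q n) ≤ q b n + 2 ^ (j + 1) ∑_{β < j} f (2 ^ (β + 1) n) / 2 ^ (β + 1)`, and since `f` is
increasing this error is at most `8 q n` times the tail of the series `∑ f (2 ^ α) / 2 ^ α`
starting near `log₂ n`. Writing a large `m` as `q n + r` with `n₀ ≤ r < n + n₀` turns this into
`b m / m ≤ b n / n + ε n + o(1)` as `m → ∞`, with `ε n → 0`; for a sequence bounded below,
such an estimate forces `limsup ≤ liminf`.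
-/

open Filter Topology Finset

theorem exists_tendsto_of_forall_eventually_le_add {α : Type*} {l : Filter α} [l.NeBot]
    {x : α → ℝ} (hbdd : IsBoundedUnder (· ≥ ·) l x)
    (h : ∀ ε > 0, ∀ᶠ n in l, ∀ᶠ m in l, x m ≤ x n + ε) :
    ∃ L, Tendsto x l (𝓝 L) := by
  have hbdd' : IsBoundedUnder (· ≤ ·) l x := by
    obtain ⟨n, hn⟩ := (h 1 one_pos).exists
    exact ⟨x n + 1, hn⟩
  refine ⟨limsup x l, tendsto_of_le_liminf_of_limsup_le ?_ le_rfl hbdd' hbdd⟩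
  refine le_of_forall_pos_le_add fun ε hε => sub_le_iff_le_add.1 ?_
  refine le_liminf_of_le hbdd'.isCoboundedUnder_ge ((h ε hε).mono fun n hn => ?_)
  exact sub_le_iff_le_add.2 (limsup_le_of_le hbdd.isCoboundedUnder_le hn)

def ApproxSubadditive (b f : ℕ → ℝ) (n₀ : ℕ) : Prop :=
  ∀ m n, n₀ ≤ m → n₀ ≤ n → b (n + m) ≤ b n + b m + f n + f m

noncomputable def dyadicTail (f : ℕ → ℝ) (A : ℕ) : ℝ :=
  ∑' k, f (2 ^ (k + A + 1)) / 2 ^ (k + A + 1)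

theorem tendsto_dyadicTail_atTop (f : ℕ → ℝ) : Tendsto (dyadicTail f) atTop (𝓝 0) :=
  tendsto_sum_nat_add fun α => f (2 ^ (α + 1)) / 2 ^ (α + 1)

variable {b f : ℕ → ℝ} {n₀ : ℕ}

theorem dyadicTail_nonneg (hf0 : ∀ n, 1 ≤ n → 0 ≤ f n) (A : ℕ) : 0 ≤ dyadicTail f A :=
  tsum_nonneg fun _ => div_nonneg (hf0 _ Nat.one_le_two_pow) (by positivity)

theorem Nat.two_pow_log_succ_le {q : ℕ} (hq : q ≠ 0) : 2 ^ (Nat.log 2 q + 1) ≤ 2 * q := by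
  rw [pow_succ']
  exact Nat.mul_le_mul_left 2 (Nat.pow_log_le_self 2 hq)

theorem Nat.tendsto_log_two_atTop : Tendsto (Nat.log 2) atTop atTop :=
  tendsto_atTop_atTop.2 fun K => ⟨2 ^ K, fun _ hm =>
    (Nat.log_pow one_lt_two K).ge.trans (Nat.log_mono_right hm)⟩

theorem sum_range_le_two_pow_mul_dyadicTail (hf0 : ∀ n, 1 ≤ n → 0 ≤ f n)
    (hf : MonotoneOn f (Set.Ici 1))
    (hsum : Summable fun α : ℕ => f (2 ^ (α + 1)) / 2 ^ (α + 1))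
    {n A : ℕ} (hn0 : 0 < n) (hnA : n ≤ 2 ^ A) (j : ℕ) :
    ∑ β ∈ range j, f (2 ^ (β + 1) * n) / 2 ^ (β + 1) ≤ 2 ^ A * dyadicTail f A := by
  have hterm (β : ℕ) : f (2 ^ (β + 1) * n) / 2 ^ (β + 1) ≤
      2 ^ A * (f (2 ^ (β + A + 1)) / 2 ^ (β + A + 1)) := by
    have hidx : β + A + 1 = β + 1 + A := by ring
    have hmono : f (2 ^ (β + 1) * n) ≤ f (2 ^ (β + A + 1)) := by
      refine hf (Nat.one_le_iff_ne_zero.2 (by positivity)) Nat.one_le_two_pow ?_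
      rw [hidx, pow_add 2 (β + 1) A]
      exact Nat.mul_le_mul_left _ hnA
    calc f (2 ^ (β + 1) * n) / 2 ^ (β + 1) ≤ f (2 ^ (β + A + 1)) / 2 ^ (β + 1) := by gcongr
      _ = 2 ^ A * (f (2 ^ (β + A + 1)) / 2 ^ (β + A + 1)) := by
        rw [hidx, pow_add (2 : ℝ) (β + 1) A]; field_simp
  calc ∑ β ∈ range j, f (2 ^ (β + 1) * n) / 2 ^ (β + 1)
      ≤ ∑ β ∈ range j, 2 ^ A * (f (2 ^ (β + A + 1)) / 2 ^ (β + A + 1)) :=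
        sum_le_sum fun β _ => hterm β
    _ ≤ 2 ^ A * dyadicTail f A := by
      rw [← mul_sum]
      gcongr
      exact ((summable_nat_add_iff A).2 hsum).sum_le_tsum _ fun k _ =>
        div_nonneg (hf0 _ Nat.one_le_two_pow) (by positivity)

theorem tendsto_div_self_of_summable_dyadic (hf0 : ∀ n, 1 ≤ n → 0 ≤ f n)
    (hf : MonotoneOn f (Set.Ici 1))
    (hsum : Summable fun α : ℕ => f (2 ^ (α + 1)) / 2 ^ (α + 1)) :
    Tendsto (fun m : ℕ => f m / m) atTop (𝓝 0) := by
  have hlim : Tendsto (fun m => 2 * (f (2 ^ (Nat.log 2 m + 1)) / 2 ^ (Nat.log 2 m + 1)))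
      atTop (𝓝 0) := by
    simpa using (hsum.tendsto_atTop_zero.comp Nat.tendsto_log_two_atTop).const_mul 2
  refine squeeze_zero' ?_ ?_ hlim
  · filter_upwards [eventually_ge_atTop 1] with m hm
    exact div_nonneg (hf0 m hm) m.cast_nonneg
  · filter_upwards [eventually_ge_atTop 1] with m hm
    have hlt := Nat.lt_pow_succ_log_self one_lt_two m
    have hle : ((2 ^ (Nat.log 2 m + 1) : ℕ) : ℝ) ≤ 2 * m := by
      exact_mod_cast Nat.two_pow_log_succ_le (by omega)
    have hm0 : (0 : ℝ) < m := by exact_mod_cast hm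
    push_cast at hle
    rw [div_le_iff₀ hm0]
    calc f m ≤ f (2 ^ (Nat.log 2 m + 1)) := hf hm Nat.one_le_two_pow hlt.le
      _ ≤ 2 * (f (2 ^ (Nat.log 2 m + 1)) / 2 ^ (Nat.log 2 m + 1)) * m := by
        rw [mul_comm 2, mul_assoc, div_mul_eq_mul_div, le_div_iff₀ (by positivity)]
        gcongr
        exact hf0 _ Nat.one_le_two_pow

theorem ApproxSubadditive.apply_mul_le (hsub : ApproxSubadditive b f n₀)
    (hf0 : ∀ n, 1 ≤ n → 0 ≤ f n) (hf : MonotoneOn f (Set.Ici 1))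
    {n : ℕ} (hn0 : 0 < n) (hn : n₀ ≤ n) (j : ℕ) {q : ℕ} (hq : 1 ≤ q) (hqj : q ≤ 2 ^ j) :
    b (q * n) ≤ q * b n + 2 ^ (j + 1) * ∑ β ∈ range j, f (2 ^ (β + 1) * n) / 2 ^ (β + 1) := by
  induction j generalizing q with
  | zero =>
    obtain rfl : q = 1 := by simp_all; omega
    simp
  | succ j ih =>
    set S := ∑ β ∈ range j, f (2 ^ (β + 1) * n) / 2 ^ (β + 1)
    set F := f (2 ^ (j + 1) * n)
    have hS : 0 ≤ S := sum_nonneg fun β _ =>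
      div_nonneg (hf0 _ (Nat.one_le_iff_ne_zero.2 (by positivity))) (by positivity)
    have hF : 0 ≤ F := hf0 _ (Nat.one_le_iff_ne_zero.2 (by positivity))
    have hrhs : (2 : ℝ) ^ (j + 1 + 1) * (S + F / 2 ^ (j + 1)) = 2 * 2 ^ (j + 1) * S + 2 * F := by
      field_simp; ring
    rw [sum_range_succ, hrhs]
    rcases le_or_gt q (2 ^ j) with hqj' | hqj'
    · have := mul_nonneg (pow_nonneg zero_le_two (j + 1)) hS
      linarith [ih hq hqj']
    have hpow : 2 ^ (j + 1) = 2 * 2 ^ j := pow_succ' 2 j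
    have hsplit := hsub (q / 2 * n) ((q - q / 2) * n)
      (hn.trans (Nat.le_mul_of_pos_left n (by omega)))
      (hn.trans (Nat.le_mul_of_pos_left n (by omega)))
    rw [← add_mul, Nat.sub_add_cancel (Nat.div_le_self q 2)] at hsplit
    have hf_le : ∀ p, 1 ≤ p → p ≤ 2 ^ j → f (p * n) ≤ F := fun p hp hpj =>
      hf (Nat.one_le_iff_ne_zero.2 (by positivity)) (Nat.one_le_iff_ne_zero.2 (by positivity))
        (Nat.mul_le_mul_right n (by omega))
    have h1 := ih (q := q - q / 2) (by omega) (by omega)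
    have h2 := ih (q := q / 2) (by omega) (by omega)
    have hq_bn : ((q - q / 2 : ℕ) : ℝ) * b n + (q / 2 : ℕ) * b n = q * b n := by
      rw [← add_mul, ← Nat.cast_add, Nat.sub_add_cancel (Nat.div_le_self q 2)]
    linarith [hf_le (q - q / 2) (by omega) (by omega), hf_le (q / 2) (by omega) (by omega)]

theorem ApproxSubadditive.apply_mul_le_mul_add (hsub : ApproxSubadditive b f n₀)
    (hf0 : ∀ n, 1 ≤ n → 0 ≤ f n) (hf : MonotoneOn f (Set.Ici 1))
    (hsum : Summable fun α : ℕ => f (2 ^ (α + 1)) / 2 ^ (α + 1))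
    {n q : ℕ} (hn0 : 0 < n) (hn : n₀ ≤ n) (hq : q ≠ 0) :
    b (q * n) ≤ q * n * (b n / n + 8 * dyadicTail f (Nat.log 2 n + 1)) := by
  set j := Nat.log 2 q + 1
  set A := Nat.log 2 n + 1
  have hT := dyadicTail_nonneg hf0 A
  have hj : (2 : ℝ) ^ (j + 1) ≤ 4 * q := by
    rw [pow_succ]
    have : ((2 ^ j : ℕ) : ℝ) ≤ 2 * q := by exact_mod_cast Nat.two_pow_log_succ_le hq
    push_cast at this
    linarith
  have hA : (2 : ℝ) ^ A ≤ 2 * n := by exact_mod_cast Nat.two_pow_log_succ_le hn0.ne'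
  have htail := sum_range_le_two_pow_mul_dyadicTail hf0 hf hsum hn0
    (Nat.lt_pow_succ_log_self one_lt_two n).le j
  have hn' : (0 : ℝ) < n := by exact_mod_cast hn0
  calc b (q * n)
      ≤ q * b n + 2 ^ (j + 1) * ∑ β ∈ range j, f (2 ^ (β + 1) * n) / 2 ^ (β + 1) :=
        hsub.apply_mul_le hf0 hf hn0 hn j (Nat.one_le_iff_ne_zero.2 hq)
          (Nat.lt_pow_succ_log_self one_lt_two q).le
    _ ≤ q * b n + 2 ^ (j + 1) * (2 * n * dyadicTail f A) := by
        gcongr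
        exact htail.trans (by gcongr)
    _ ≤ q * b n + 4 * q * (2 * n * dyadicTail f A) := by
        gcongr
    _ = q * n * (b n / n + 8 * dyadicTail f A) := by
        field_simp
        ring

theorem ApproxSubadditive.div_le_div_add (hsub : ApproxSubadditive b f n₀)
    (hb : ∀ n, 1 ≤ n → 0 ≤ b n) (hf0 : ∀ n, 1 ≤ n → 0 ≤ f n) (hf : MonotoneOn f (Set.Ici 1))
    (hsum : Summable fun α : ℕ => f (2 ^ (α + 1)) / 2 ^ (α + 1)) (hn₀ : 0 < n₀)
    {n m : ℕ} (hn : n₀ ≤ n) (hm : n + n₀ ≤ m) {C : ℝ} (hC : ∀ r < n + n₀, b r ≤ C) :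
    b m / m ≤ b n / n + 8 * dyadicTail f (Nat.log 2 n + 1) + C / m + 2 * (f m / m) := by
  set E := b n / n + 8 * dyadicTail f (Nat.log 2 n + 1)
  have hE : 0 ≤ E := add_nonneg (div_nonneg (hb n (by omega)) n.cast_nonneg)
    (mul_nonneg (by norm_num) (dyadicTail_nonneg hf0 _))
  -- Euclidean division of `m - n₀` by `n` leaves a remainder `n₀ + s` with `s < n`
  have hdm := Nat.div_add_mod (m - n₀) n
  have hs := Nat.mod_lt (m - n₀) (show 0 < n by omega)
  have hq : (m - n₀) / n ≠ 0 := (Nat.div_pos (by omega) (by omega)).ne'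
  generalize (m - n₀) / n = q at hdm hq
  generalize (m - n₀) % n = s at hdm hs
  have hm_eq : q * n + (n₀ + s) = m := by rw [mul_comm] at hdm; omega
  have hqn : 1 ≤ q * n := Nat.one_le_iff_ne_zero.2 (Nat.mul_ne_zero hq (by omega))
  have hsplit := hsub (n₀ + s) (q * n) (by omega) (hn.trans (Nat.le_mul_of_pos_left n (by omega)))
  rw [hm_eq] at hsplit
  have hfq : f (q * n) ≤ f m := hf hqn (by simp; omega) (by omega)
  have hfr : f (n₀ + s) ≤ f m := hf (by simp; omega) (by simp; omega) (by omega)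
  have hqE : (q * n : ℝ) * E ≤ m * E := by gcongr; exact_mod_cast (by omega : q * n ≤ m)
  have hm : (0 : ℝ) < m := by exact_mod_cast (by omega : 0 < m)
  rw [div_le_iff₀ hm]
  calc b m ≤ m * E + C + 2 * f m := by
        linarith [hsub.apply_mul_le_mul_add hf0 hf hsum (by omega) hn hq, hC (n₀ + s) (by omega)]
    _ = (E + C / m + 2 * (f m / m)) * m := by field_simp

theorem stmt_19 (b : ℕ → ℝ) (hb : ∀ n : ℕ, 1 ≤ n → 0 ≤ b n)
    (f : ℕ → ℝ) (hf0 : ∀ n : ℕ, 1 ≤ n → 0 ≤ f n)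
    (hfmono : ∀ m n : ℕ, 1 ≤ m → m ≤ n → f m ≤ f n)
    (hsum : Summable (fun α : ℕ => f (2 ^ (α + 1)) / 2 ^ (α + 1)))
    (h : ∃ n₀ : ℕ, 0 < n₀ ∧ ∀ m n : ℕ, n₀ ≤ m → n₀ ≤ n →
      b (n + m) ≤ b n + b m + f n + f m) :
    ∃ L : ℝ, 0 ≤ L ∧ Tendsto (fun n : ℕ => b n / n) atTop (nhds L) := by
  obtain ⟨n₀, hn₀, hsub : ApproxSubadditive b f n₀⟩ := h
  have hf : MonotoneOn f (Set.Ici 1) := fun m hm n _ hmn => hfmono m n hm hmn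
  have hx0 : ∀ᶠ m : ℕ in atTop, 0 ≤ b m / m :=
    (eventually_ge_atTop 1).mono fun m hm => div_nonneg (hb m hm) m.cast_nonneg
  obtain ⟨L, hL⟩ : ∃ L, Tendsto (fun n : ℕ => b n / n) atTop (𝓝 L) := by
    refine exists_tendsto_of_forall_eventually_le_add (isBoundedUnder_of_eventually_ge hx0)
      fun ε hε => ?_
    have hT : Tendsto (fun n => 8 * dyadicTail f (Nat.log 2 n + 1)) atTop (𝓝 0) := by
      simpa using ((tendsto_dyadicTail_atTop f).comp
        ((tendsto_add_atTop_nat 1).comp Nat.tendsto_log_two_atTop)).const_mul 8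
    filter_upwards [hT.eventually_lt_const (half_pos hε), eventually_ge_atTop n₀] with n hnT hn
    obtain ⟨C, hC⟩ := ((range (n + n₀)).image b).exists_le
    have hrem : Tendsto (fun m : ℕ => C / m + 2 * (f m / m)) atTop (𝓝 0) := by
      simpa using (tendsto_const_div_atTop_nhds_zero_nat C).add
        ((tendsto_div_self_of_summable_dyadic hf0 hf hsum).const_mul 2)
    filter_upwards [hrem.eventually_lt_const (half_pos hε), eventually_ge_atTop (n + n₀)]
      with m hmC hm
    have := hsub.div_le_div_add hb hf0 hf hsum hn₀ hn hm fun r hr =>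
      hC _ (mem_image_of_mem b (mem_range.2 hr))
    linarith
  exact ⟨L, ge_of_tendsto hL hx0, hL⟩
end
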